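/- arXiv:1403.6696 — 2 statements merged into one kernel-verified Lean document; each statement's English description precedes it below -/
import Mathlib

section
/- Let n ≥ 5 be an integer, a ∈ ℂ, and b ∈ ℂ with b ≠ 0, and let A† be the associated n×n tridiagonal matrix. Then det(A†) = ∏_{k=1}^{n} (a − 2b·cos(kπ/n)). -/
/-!
Expanding along the last row, the leading `k × k` minors `D k` of a tridiagonal matrix satisfy
`D (k + 2) = d (k + 1) * D (k + 1) - u k * l k * D k`. For `A†` every product `u k * l k` is
`b ^ 2`, so after writing `a = 2 b x` the minors of size `k < n` are `b ^ k (U_k(x) + U_{k-1}(x))`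
with `U` the Chebyshev polynomials of the second kind, and the corner entry `a + b` turns the last
step into `det A† = (a + 2 b) b ^ (n - 1) U_{n-1}(x)`. The zeros of `U_{n-1}` are the
`cos (k π / n)` with `1 ≤ k ≤ n - 1`, and `a + 2 b` is the factor `k = n` of the product.
-/

/-- The `n × n` complex tridiagonal matrix `A†` (1-based indices): `A†_{1,1} = A†_{n,n} = a + b`,
`A†_{j,j} = a` for `2 ≤ j ≤ n-1`, `A†_{1,2} = A†_{2,1} = b`, `A†_{n-1,n} = A†_{n,n-1} = b`,
`A†_{j,j+1} = A†_{j+1,j} = -b` for `2 ≤ j ≤ n-2`, all other entries `0`. -/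
def matAdag (n : ℕ) (a b : ℂ) : Matrix (Fin n) (Fin n) ℂ :=
  Matrix.of fun i j =>
    let i' := (i : ℕ) + 1
    let j' := (j : ℕ) + 1
    if i' = j' then (if i' = 1 ∨ i' = n then a + b else a)
    else if (i' = 1 ∧ j' = 2) ∨ (i' = 2 ∧ j' = 1) ∨ (i' = n - 1 ∧ j' = n) ∨ (i' = n ∧ j' = n - 1) then b
    else if (i' + 1 = j' ∨ j' + 1 = i') ∧ 2 ≤ min i' j' ∧ min i' j' ≤ n - 2 then -b
    else 0

open Polynomial Polynomial.Chebyshev Real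

namespace Matrix

variable {R : Type*} [CommRing R] (d u l : ℕ → R)

def tridiagonal (m : ℕ) : Matrix (Fin m) (Fin m) R :=
  of fun i j =>
    if (i : ℕ) = j then d i
    else if (i : ℕ) + 1 = j then u i
    else if (j : ℕ) + 1 = i then l j
    else 0

variable {d u l}

lemma tridiagonal_apply_eq_zero {m : ℕ} {i j : Fin m} (h : (i : ℕ) + 2 ≤ j ∨ (j : ℕ) + 2 ≤ i) :
    tridiagonal d u l m i j = 0 := by
  simp only [tridiagonal, of_apply]
  split_ifs <;> first | rfl | omega

variable (d u l)

lemma tridiagonal_submatrix_castSucc (m : ℕ) :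
    (tridiagonal d u l (m + 1)).submatrix Fin.castSucc Fin.castSucc = tridiagonal d u l m := by
  ext i j
  simp [tridiagonal]

lemma det_tridiagonal_submatrix_castSucc_succAbove (m : ℕ) :
    ((tridiagonal d u l (m + 2)).submatrix Fin.castSucc (Fin.last m).castSucc.succAbove).det =
      u m * (tridiagonal d u l m).det := by
  have h_corner : tridiagonal d u l (m + 2) (Fin.last m).castSucc
      ((Fin.last m).castSucc.succAbove (Fin.last m)) = u m := by
    simp [tridiagonal, Fin.succAbove_of_le_castSucc]
  have h_minor : (tridiagonal d u l (m + 2)).submatrix (Fin.castSucc ∘ Fin.castSucc)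
      ((Fin.last m).castSucc.succAbove ∘ Fin.castSucc) = tridiagonal d u l m := by
    ext i j
    simp [tridiagonal, Fin.succAbove_of_castSucc_lt, Fin.castSucc_lt_castSucc_iff]
  rw [det_succ_column _ (Fin.last _), Fin.sum_univ_castSucc, Finset.sum_eq_zero]
  · simp only [Fin.succAbove_last, submatrix_submatrix, submatrix_apply, h_corner, h_minor]
    simp
  · intro i _
    rw [submatrix_apply, tridiagonal_apply_eq_zero]
    · ring
    · simp [Fin.succAbove_of_le_castSucc]

lemma det_tridiagonal_succ_succ (m : ℕ) :
    (tridiagonal d u l (m + 2)).det =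
      d (m + 1) * (tridiagonal d u l (m + 1)).det - u m * l m * (tridiagonal d u l m).det := by
  have h_diag : tridiagonal d u l (m + 2) (Fin.last _) (Fin.last _) = d (m + 1) := by
    simp [tridiagonal]
  have h_sub : tridiagonal d u l (m + 2) (Fin.last _) (Fin.last m).castSucc = l m := by
    simp only [tridiagonal, of_apply, Fin.val_last, Fin.val_castSucc]
    rw [if_neg (by omega), if_neg (by omega), if_pos trivial]
  rw [det_succ_row _ (Fin.last _), Fin.sum_univ_castSucc, Fin.sum_univ_castSucc,
    Finset.sum_eq_zero, h_diag, h_sub]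
  · simp only [Fin.succAbove_last, tridiagonal_submatrix_castSucc,
      det_tridiagonal_submatrix_castSucc_succAbove]
    simp only [Fin.val_last, Fin.val_castSucc, odd_add_one_self, Odd.neg_one_pow, neg_mul,
      one_mul, zero_add, Even.add_self, Even.neg_pow, one_pow]
    ring
  · intro j _
    rw [tridiagonal_apply_eq_zero]
    · ring
    · simp

end Matrix

namespace Polynomial.Chebyshev

lemma U_real_eq_prod (m : ℕ) :
    U ℝ m = Polynomial.C (2 ^ m) *
      ∏ k ∈ Finset.range m, (X - Polynomial.C (cos ((k + 1) * π / (m + 1)))) := by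
  have h_roots : (U ℝ m).roots =
      (Finset.range m).val.map fun k : ℕ => cos ((k + 1) * π / (m + 1)) := by
    rw [roots_U_real, Finset.image_val_of_injOn
      (Finset.nodup_map_iff_injOn.mp (roots_U_real_nodup m))]
  have h_card : Multiset.card (U ℝ m).roots = (U ℝ m).natDegree := by
    rw [h_roots, Multiset.card_map, Finset.card_val, Finset.card_range, natDegree_U_natCast]
  conv_lhs => rw [← C_leadingCoeff_mul_prod_multiset_X_sub_C h_card]
  rw [leadingCoeff_U_natCast, h_roots, Multiset.map_map]
  rfl

lemma eval_U_complex_eq_prod (m : ℕ) (z : ℂ) :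
    (U ℂ m).eval z = 2 ^ m * ∏ k ∈ Finset.range m, (z - cos ((k + 1) * π / (m + 1))) := by
  rw [← map_U (algebraMap ℝ ℂ), U_real_eq_prod]
  simp

end Polynomial.Chebyshev

open Matrix

def matAdagDiag (n : ℕ) (a b : ℂ) (i : ℕ) : ℂ := if i = 0 ∨ i = n - 1 then a + b else a

def matAdagOffDiag (n : ℕ) (b : ℂ) (i : ℕ) : ℂ := if i = 0 ∨ i = n - 2 then b else -b

lemma matAdag_eq_tridiagonal (n : ℕ) (a b : ℂ) :
    matAdag n a b =
      tridiagonal (matAdagDiag n a b) (matAdagOffDiag n b) (matAdagOffDiag n b) n := by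
  ext i j
  simp only [matAdag, tridiagonal, matAdagDiag, matAdagOffDiag, of_apply]
  split_ifs <;> first | rfl | omega

lemma matAdagOffDiag_mul_self (n : ℕ) (b : ℂ) (i : ℕ) :
    matAdagOffDiag n b i * matAdagOffDiag n b i = b ^ 2 := by
  unfold matAdagOffDiag
  split_ifs <;> ring

-- `U` is indexed by `ℤ`: `k - 1` is not truncated, and `U ℂ (-1) = 0`.
lemma det_tridiagonal_matAdagDiag_of_lt (b x : ℂ) {n : ℕ} : ∀ k < n,
    (tridiagonal (matAdagDiag n (2 * b * x) b) (matAdagOffDiag n b) (matAdagOffDiag n b) k).det =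
      b ^ k * ((U ℂ k).eval x + (U ℂ (k - 1)).eval x)
  | 0, _ => by simp
  | 1, _ => by simp [tridiagonal, matAdagDiag, mul_add, mul_comm, mul_left_comm]
  | k + 2, hk => by
    have h_diag : matAdagDiag n (2 * b * x) b (k + 1) = 2 * b * x := if_neg (by omega)
    have h_U₂ : (U ℂ (k + 2)).eval x = 2 * x * (U ℂ (k + 1)).eval x - (U ℂ k).eval x := by
      simp [U_add_two]
    have h_U₁ : (U ℂ (k + 1)).eval x = 2 * x * (U ℂ k).eval x - (U ℂ (k - 1)).eval x := by
      simp [U_add_one]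
    rw [det_tridiagonal_succ_succ, h_diag, matAdagOffDiag_mul_self,
      det_tridiagonal_matAdagDiag_of_lt b x (k + 1) (by omega),
      det_tridiagonal_matAdagDiag_of_lt b x k (by omega)]
    push_cast
    rw [add_sub_cancel_right, add_sub_assoc, show (2 : ℤ) - 1 = 1 by norm_num]
    linear_combination -b ^ (k + 2) * (h_U₂ + h_U₁)

lemma det_matAdag (m : ℕ) (b x : ℂ) :
    (matAdag (m + 2) (2 * b * x) b).det = 2 * b ^ (m + 2) * (x + 1) * (U ℂ ↑(m + 1)).eval x := by
  have h_diag : matAdagDiag (m + 2) (2 * b * x) b (m + 1) = 2 * b * x + b := if_pos (Or.inr rfl)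
  have h_U : (U ℂ (m + 1)).eval x = 2 * x * (U ℂ m).eval x - (U ℂ (m - 1)).eval x := by
    simp [U_add_one]
  rw [matAdag_eq_tridiagonal, det_tridiagonal_succ_succ, h_diag, matAdagOffDiag_mul_self,
    det_tridiagonal_matAdagDiag_of_lt b x (m + 1) (by omega),
    det_tridiagonal_matAdagDiag_of_lt b x m (by omega)]
  push_cast
  rw [add_sub_cancel_right]
  linear_combination -b ^ (m + 2) * h_U

/-- For `n ≥ 5`, `a b : ℂ` with `b ≠ 0`,
`det A† = ∏_{k=1}^{n} (a - 2b·cos(kπ/n))`. -/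
theorem det_matAdag_prod (n : ℕ) (hn : 5 ≤ n) (a b : ℂ) (hb : b ≠ 0) :
    Matrix.det (matAdag n a b) =
      ∏ k ∈ Finset.Icc 1 n,
        (a - 2 * b * (Real.cos ((k : ℝ) * Real.pi / (n : ℝ)) : ℂ)) := by
  obtain ⟨m, rfl⟩ : ∃ m, n = m + 2 := ⟨n - 2, by omega⟩
  obtain ⟨x, rfl⟩ : ∃ x, a = 2 * b * x := ⟨a / (2 * b), by field_simp⟩
  have h_last : (cos (((1 + (m + 1) : ℕ) : ℝ) * π / ((m + 2 : ℕ) : ℝ)) : ℂ) = -1 := by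
    rw [show ((1 + (m + 1) : ℕ) : ℝ) * π / ((m + 2 : ℕ) : ℝ) = π by field_simp; push_cast; ring]
    simp
  have h_factor : ∀ k ∈ Finset.range (m + 1),
      2 * b * x - 2 * b * (cos (((1 + k : ℕ) : ℝ) * π / ((m + 2 : ℕ) : ℝ)) : ℂ) =
        2 * b * (x - cos ((k + 1) * π / ((m + 1 : ℕ) + 1))) := by
    intro k _
    push_cast
    ring_nf
  rw [det_matAdag, ← Finset.Ico_add_one_right_eq_Icc, Finset.prod_Ico_eq_prod_range,
    Nat.add_sub_cancel, Finset.prod_range_succ, h_last, Finset.prod_congr rfl h_factor,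
    Finset.prod_mul_distrib, Finset.prod_const, Finset.card_range, eval_U_complex_eq_prod]
  ring
end

section
/- Let n ≥ 5 be an integer, a ∈ ℂ, and b ∈ ℂ with b ≠ 0, and let A† be the associated n×n tridiagonal matrix. Then det(A†) = (a+b)²·D_{n−2} − 2b²(a+b)·D_{n−3} + b⁴·D_{n−4}, where D_m = det(tridiag_m(−b, a, −b)) (with the convention D_0 = 1). -/
/-- `tridiag m p q` : the `m × m` matrix with diagonal entries `q`,
sub- and super-diagonal entries `p`, and all other entries `0`. -/
def tridiag (m : ℕ) (p q : ℂ) : Matrix (Fin m) (Fin m) ℂ :=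
  Matrix.of fun i j =>
    if (i : ℕ) = (j : ℕ) then q
    else if (i : ℕ) + 1 = (j : ℕ) ∨ (j : ℕ) + 1 = (i : ℕ) then p
    else 0

/-!
Conjugating `A†` by the sign matrix `diag(-1, 1, …, 1, -1)` turns every off-diagonal `b` into
`-b`, so `A†` is similar to `tridiag_n(-b, a, -b)` with `b` added to its two corner entries.
Adding `c` to a diagonal entry adds `c` times the complementary principal minor to the
determinant, so
`det A† = D_n + 2b D_{n-1} + b² D_{n-2}`; the three-term recurrence
`D_{m+2} = a D_{m+1} - b² D_m` rewrites this in the stated form.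
-/

open Matrix

namespace Matrix

variable {R : Type*} [CommRing R] {k : ℕ}

theorem det_add_single_self (M : Matrix (Fin (k + 1)) (Fin (k + 1)) R) (i : Fin (k + 1))
    (c : R) :
    (M + single i i c).det = M.det + c * (M.submatrix i.succAbove i.succAbove).det := by
  have hminor (j : Fin (k + 1)) : (M + single i i c).submatrix i.succAbove j.succAbove =
      M.submatrix i.succAbove j.succAbove := by
    ext x y
    simp
  rw [det_succ_row _ i, det_succ_row M i]
  simp only [hminor, add_apply, mul_add, add_mul, Finset.sum_add_distrib, single_apply, true_and]
  simp [← two_mul]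

theorem det_eq_mul_det_succ_of_col_zero (M : Matrix (Fin (k + 1)) (Fin (k + 1)) R)
    (h : ∀ i : Fin k, M i.succ 0 = 0) : M.det = M 0 0 * (M.submatrix Fin.succ Fin.succ).det := by
  simp [det_succ_column_zero, Fin.sum_univ_succ, h]

theorem det_diagonal_mul_mul_diagonal {s : Fin k → R} (hs : ∀ i, s i * s i = 1)
    (M : Matrix (Fin k) (Fin k) R) : (diagonal s * M * diagonal s).det = M.det := by
  rw [det_mul, det_mul, mul_right_comm, ← det_mul, diagonal_mul_diagonal, funext hs,
    diagonal_one, det_one, one_mul]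

end Matrix

section tridiag

variable (k : ℕ) (p q : ℂ)

theorem tridiag_submatrix_succ :
    (tridiag (k + 1) p q).submatrix Fin.succ Fin.succ = tridiag k p q := by
  ext i j
  simp only [tridiag, submatrix_apply, of_apply, Fin.val_succ]
  exact if_congr (by omega) rfl (if_congr (by omega) rfl rfl)

theorem tridiag_submatrix_castSucc :
    (tridiag (k + 1) p q).submatrix Fin.castSucc Fin.castSucc = tridiag k p q := by
  ext i j
  simp only [tridiag, submatrix_apply, of_apply, Fin.val_castSucc]

theorem det_tridiag_succ_succ :
    (tridiag (k + 2) p q).det = q * (tridiag (k + 1) p q).det - p ^ 2 * (tridiag k p q).det := by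
  set T := tridiag (k + 2) p q
  have hminor :
      (T.submatrix Fin.succ (1 : Fin (k + 2)).succAbove).det = p * (tridiag k p q).det := by
    rw [det_eq_mul_det_succ_of_col_zero _ fun i ↦ by simp [T, tridiag], submatrix_submatrix,
      show (1 : Fin (k + 2)).succAbove ∘ Fin.succ = Fin.succ ∘ Fin.succ from
        funext Fin.one_succAbove_succ,
      ← submatrix_submatrix, tridiag_submatrix_succ, tridiag_submatrix_succ]
    simp [T, tridiag]
  have hrow (j : Fin k) : T 0 j.succ.succ = 0 := by simp [T, tridiag]
  have hdiag : T 0 0 = q := by simp [T, tridiag]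
  have hsuper : T 0 1 = p := by simp [T, tridiag]
  have hsucc : T.submatrix Fin.succ Fin.succ = tridiag (k + 1) p q := tridiag_submatrix_succ ..
  rw [det_succ_row_zero, Fin.sum_univ_succ, Fin.sum_univ_succ]
  simp only [hrow, hdiag, hsuper, hminor, hsucc, Fin.succ_zero_eq_one, Fin.succAbove_zero,
    Fin.val_zero, Fin.val_one, mul_zero, zero_mul, Finset.sum_const_zero, add_zero]
  ring

theorem det_tridiag_add_single_corners (c : ℂ) :
    (tridiag (k + 2) p q + single 0 0 c + single (Fin.last (k + 1)) (Fin.last (k + 1)) c).det =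
      (tridiag (k + 2) p q).det + 2 * c * (tridiag (k + 1) p q).det +
        c ^ 2 * (tridiag k p q).det := by
  have hcorner : (tridiag (k + 2) p q + single 0 0 c).submatrix Fin.castSucc Fin.castSucc =
      tridiag (k + 1) p q + single 0 0 c := by
    rw [submatrix_add, Pi.add_apply, Pi.add_apply, tridiag_submatrix_castSucc]
    ext i j
    simp [single_apply, eq_comm]
  rw [det_add_single_self, Fin.succAbove_last, hcorner, det_add_single_self, det_add_single_self]
  simp only [Fin.succAbove_zero, tridiag_submatrix_succ]
  ring

end tridiag

theorem matAdag_eq_conj_tridiag_add_corners (k : ℕ) (a b : ℂ) :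
    matAdag (k + 3) a b =
      diagonal (fun i ↦ if i = 0 ∨ i = Fin.last (k + 2) then -1 else 1) *
        (tridiag (k + 3) (-b) a + single 0 0 b + single (Fin.last (k + 2)) (Fin.last (k + 2)) b) *
      diagonal (fun i ↦ if i = 0 ∨ i = Fin.last (k + 2) then -1 else 1) := by
  ext i j
  have := i.isLt
  have := j.isLt
  simp only [matAdag, tridiag, Matrix.add_apply, single_apply, of_apply, mul_diagonal,
    diagonal_mul, Fin.ext_iff, Fin.val_zero, Fin.val_last, min_def]
  split_ifs <;> first | ring1 | omega

theorem det_matAdag_s15 (k : ℕ) (a b : ℂ) :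
    (matAdag (k + 3) a b).det =
      (tridiag (k + 3) (-b) a).det + 2 * b * (tridiag (k + 2) (-b) a).det +
        b ^ 2 * (tridiag (k + 1) (-b) a).det := by
  rw [matAdag_eq_conj_tridiag_add_corners,
    det_diagonal_mul_mul_diagonal fun i ↦ by split_ifs <;> norm_num,
    det_tridiag_add_single_corners]

theorem det_matAdag_laplace_general (n : ℕ) (hn : 5 ≤ n) (a b : ℂ) :
    Matrix.det (matAdag n a b) =
      (a + b) ^ 2 * Matrix.det (tridiag (n - 2) (-b) a) -
        2 * b ^ 2 * (a + b) * Matrix.det (tridiag (n - 3) (-b) a) +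
        b ^ 4 * Matrix.det (tridiag (n - 4) (-b) a) := by
  obtain ⟨k, rfl⟩ : ∃ k, n = k + 5 := ⟨n - 5, by omega⟩
  rw [show k + 5 - 2 = k + 3 by omega, show k + 5 - 3 = k + 2 by omega,
    show k + 5 - 4 = k + 1 by omega, det_matAdag_s15 (k + 2)]
  linear_combination det_tridiag_succ_succ (k + 3) (-b) a +
    (a + 2 * b) * det_tridiag_succ_succ (k + 2) (-b) a -
    b ^ 2 * det_tridiag_succ_succ (k + 1) (-b) a

/-- For `n ≥ 5`, `a b : ℂ` with `b ≠ 0`,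
`det A† = (a+b)²·D_{n-2} - 2b²(a+b)·D_{n-3} + b⁴·D_{n-4}`,
where `D_m = det(tridiag_m(-b, a, -b))`. -/
theorem det_matAdag_laplace (n : ℕ) (hn : 5 ≤ n) (a b : ℂ) (hb : b ≠ 0) :
    Matrix.det (matAdag n a b) =
      (a + b) ^ 2 * Matrix.det (tridiag (n - 2) (-b) a) -
        2 * b ^ 2 * (a + b) * Matrix.det (tridiag (n - 3) (-b) a) +
        b ^ 4 * Matrix.det (tridiag (n - 4) (-b) a) :=
  det_matAdag_laplace_general n hn a b
end
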